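/- arXiv:2602.11467 — 2 statements merged into one kernel-verified Lean document; each statement's English description precedes it below -/
import Mathlib

section
/- Let μ : ℝ → (Fin n → ℝ) and S : ℝ → Matrix (Fin n) (Fin n) ℝ be functions that are differentiable at t₀, with S(t) symmetric and positive definite for every t. Fix d ∈ ℝⁿ and set r = d − μ(t₀), Σ = S(t₀), μ' = deriv μ t₀, Σ' = deriv S t₀. Then the function t ↦ log((2π)^{-n/2} (det S(t))^{-1/2} exp(−(1/2)(d − μ(t))ᵀ S(t)⁻¹ (d − μ(t)))) has derivative at t₀ equal to μ'ᵀ Σ⁻¹ r + (1/2) rᵀ Σ⁻¹ Σ' Σ⁻¹ r − (1/2) trace(Σ⁻¹ Σ'). -/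
/-! Taking logarithms splits the log-density into a constant, `-½ log det S(t)` and `-½` times
the quadratic form. Jacobi's formula `(det S)' = tr (adj S · S')` gives
`(log det S)' = tr (S⁻¹ S')`, the inverse has derivative `-S⁻¹ S' S⁻¹`, and the symmetry of `S⁻¹`
merges the two terms of the quadratic form's derivative in which `μ'` appears. -/

open Real Matrix

attribute [local instance] Matrix.normedAddCommGroup Matrix.normedSpace

variable {𝕜 ι : Type*} [NontriviallyNormedField 𝕜] [Fintype ι]

theorem HasDerivAt.sum_sum_mul_mul {v w : 𝕜 → ι → 𝕜} {M : 𝕜 → Matrix ι ι 𝕜} {v' w' : ι → 𝕜}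
    {M' : Matrix ι ι 𝕜} {t : 𝕜} (hv : HasDerivAt v v' t) (hM : HasDerivAt M M' t)
    (hw : HasDerivAt w w' t) :
    HasDerivAt (fun t => ∑ i, ∑ j, v t i * M t i j * w t j)
      (∑ i, ∑ j, ((v' i * M t i j + v t i * M' i j) * w t j + v t i * M t i j * w' j)) t :=
  .fun_sum fun i _ => .fun_sum fun j _ =>
    ((hasDerivAt_pi.1 hv i).mul (hasDerivAt_pi.1 (hasDerivAt_pi.1 hM i) j)).mul
      (hasDerivAt_pi.1 hw j)

theorem HasDerivAt.sum_sum_mul_mul_self {v : 𝕜 → ι → 𝕜} {M : 𝕜 → Matrix ι ι 𝕜} {v' : ι → 𝕜}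
    {M' : Matrix ι ι 𝕜} {t : 𝕜} (hv : HasDerivAt v v' t) (hM : HasDerivAt M M' t)
    (hsymm : (M t).IsSymm) :
    HasDerivAt (fun t => ∑ i, ∑ j, v t i * M t i j * v t j)
      (2 * ∑ i, ∑ j, v' i * M t i j * v t j + ∑ i, ∑ j, v t i * M' i j * v t j) t := by
  refine (hv.sum_sum_mul_mul hM hv).congr_deriv ?_
  have hswap : ∑ i, ∑ j, v t i * M t i j * v' j = ∑ i, ∑ j, v' i * M t i j * v t j := by
    rw [Finset.sum_comm]
    refine Finset.sum_congr rfl fun i _ => Finset.sum_congr rfl fun j _ => ?_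
    rw [hsymm.apply i j]
    ring
  simp only [add_mul, Finset.sum_add_distrib, hswap]
  ring

variable [DecidableEq ι]

theorem Matrix.sum_det_updateRow_eq_trace_adjugate_mul (A B : Matrix ι ι 𝕜) :
    ∑ i, (A.updateRow i (B i)).det = (A.adjugate * B).trace := by
  rw [trace_mul_comm]
  simp only [← cramer_transpose_apply, cramer_eq_adjugate_mulVec, trace, diag, mulVec, dotProduct,
    mul_apply, ← adjugate_transpose, transpose_apply, mul_comm]

theorem HasDerivAt.matrix_det {S : 𝕜 → Matrix ι ι 𝕜} {S' : Matrix ι ι 𝕜} {t : 𝕜}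
    (hS : HasDerivAt S S' t) :
    HasDerivAt (fun t => (S t).det) ((S t).adjugate * S').trace t := by
  let det : ContinuousMultilinearMap 𝕜 (fun _ : ι => ι → 𝕜) 𝕜 :=
    ⟨(detRowAlternating (R := 𝕜) (n := ι)).toMultilinearMap, continuous_id.matrix_det⟩
  exact ((det.hasFDerivAt (S t)).comp_hasDerivAt t hS).congr_deriv
    ((det.linearDeriv_apply _ _).trans (sum_det_updateRow_eq_trace_adjugate_mul _ _))

section

/- To see the matrices as a complete normed algebra, where `Ring.inverse` is known to be
differentiable, they get the operator norm `‖·‖∞`; it induces the product topology, which is all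
that `HasDerivAt` depends on. Instance search does not identify the two descriptions of this
uniform structure, hence the explicit completeness instance. -/
attribute [-instance] Matrix.normedAddCommGroup Matrix.normedSpace

theorem HasDerivAt.matrix_inv [CompleteSpace 𝕜] {S : 𝕜 → Matrix ι ι 𝕜} {S' : Matrix ι ι 𝕜}
    {t : 𝕜} (hS : HasDerivAt S S' t) (hdet : IsUnit (S t).det) :
    HasDerivAt (fun t => (S t)⁻¹) (-((S t)⁻¹ * S' * (S t)⁻¹)) t := by
  let _ : NormedRing (Matrix ι ι 𝕜) := Matrix.linftyOpNormedRing
  let _ : NormedAlgebra 𝕜 (Matrix ι ι 𝕜) := Matrix.linftyOpNormedAlgebra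
  have : HasSummableGeomSeries (Matrix ι ι 𝕜) :=
    @instHasSummableGeomSeriesOfCompleteSpace _ _ (by exact FiniteDimensional.complete 𝕜 _)
  have hu : IsUnit (S t) := (isUnit_iff_isUnit_det _).2 hdet
  have h := (hasFDerivAt_ringInverse (𝕜 := 𝕜) hu.unit).comp_hasDerivAt t hS
  simp only [Function.comp_def, ← nonsing_inv_eq_ringInverse, _root_.neg_apply,
    ContinuousLinearMap.mulLeftRight_apply, coe_units_inv, IsUnit.unit_spec] at h
  exact h

end

theorem HasDerivAt.log_matrix_det {S : ℝ → Matrix ι ι ℝ} {S' : Matrix ι ι ℝ} {t : ℝ}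
    (hS : HasDerivAt S S' t) (hdet : (S t).det ≠ 0) :
    HasDerivAt (fun t => Real.log (S t).det) ((S t)⁻¹ * S').trace t := by
  convert hS.matrix_det.log hdet using 1
  rw [inv_def, Ring.inverse_eq_inv', smul_mul, trace_smul, smul_eq_mul, inv_mul_eq_div]

theorem Real.log_mul_rpow_mul_exp {c D : ℝ} (hc : 0 < c) (hD : 0 < D) (p q : ℝ) :
    Real.log (c * D ^ p * Real.exp q) = Real.log c + p * Real.log D + q := by
  rw [Real.log_mul (by positivity) (Real.exp_ne_zero _), Real.log_mul hc.ne' (by positivity),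
    Real.log_rpow hD, Real.log_exp]

theorem gaussian_score_formula_general {n : ℕ}
    (μ : ℝ → (Fin n → ℝ)) (S : ℝ → Matrix (Fin n) (Fin n) ℝ) (t₀ : ℝ)
    (hμ : DifferentiableAt ℝ μ t₀) (hS : DifferentiableAt ℝ S t₀)
    (hsym : ∀ t, (S t).IsSymm) (hpd : ∀ t, (S t).PosDef)
    (d : Fin n → ℝ) :
    HasDerivAt
      (fun t => Real.log ((2 * Real.pi) ^ (-(n : ℝ) / 2) * (S t).det ^ (-(1 : ℝ) / 2) *
        Real.exp (-(1/2 : ℝ) * ∑ i, ∑ j, (d i - μ t i) * (S t)⁻¹ i j * (d j - μ t j))))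
      ((∑ i, ∑ j, deriv μ t₀ i * (S t₀)⁻¹ i j * (d j - μ t₀ j))
        + (1/2 : ℝ) * ∑ i, ∑ j,
            (d i - μ t₀ i) * ((S t₀)⁻¹ * deriv S t₀ * (S t₀)⁻¹) i j * (d j - μ t₀ j)
        - (1/2 : ℝ) * ((S t₀)⁻¹ * deriv S t₀).trace) t₀ := by
  have hS' : HasDerivAt S (deriv S t₀) t₀ := hS.hasDerivAt
  have hdet t : 0 < (S t).det := (hpd t).det_pos
  have hlogdet := hS'.log_matrix_det (hdet t₀).ne'
  have hquad := (hμ.hasDerivAt.const_sub d).sum_sum_mul_mul_self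
    (hS'.matrix_inv (hdet t₀).ne'.isUnit) (hsym t₀).inv
  have hsplit := ((hlogdet.const_mul (-(1 : ℝ) / 2)).const_add
    (Real.log ((2 * Real.pi) ^ (-(n : ℝ) / 2)))).add (hquad.const_mul (-(1 / 2 : ℝ)))
  refine (hsplit.congr_of_eventuallyEq (.of_forall fun t => ?_)).congr_deriv ?_
  · exact Real.log_mul_rpow_mul_exp (by positivity) (hdet t) _ _
  · simp only [Pi.neg_apply, Pi.sub_apply, Matrix.neg_apply, neg_mul, mul_neg,
      Finset.sum_neg_distrib]
    ring

/-- The score function of the heteroscedastic Gaussian family with respect to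
the time parameter: the time derivative of the Gaussian log-density. -/
theorem gaussian_score_formula {n : ℕ} (hn : 0 < n)
    (μ : ℝ → (Fin n → ℝ)) (S : ℝ → Matrix (Fin n) (Fin n) ℝ) (t₀ : ℝ)
    (hμ : DifferentiableAt ℝ μ t₀) (hS : DifferentiableAt ℝ S t₀)
    (hsym : ∀ t, (S t).IsSymm) (hpd : ∀ t, (S t).PosDef)
    (d : Fin n → ℝ) :
    HasDerivAt
      (fun t => Real.log ((2 * Real.pi) ^ (-(n : ℝ) / 2) * (S t).det ^ (-(1 : ℝ) / 2) *
        Real.exp (-(1/2 : ℝ) * ∑ i, ∑ j, (d i - μ t i) * (S t)⁻¹ i j * (d j - μ t j))))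
      ((∑ i, ∑ j, deriv μ t₀ i * (S t₀)⁻¹ i j * (d j - μ t₀ j))
        + (1/2 : ℝ) * ∑ i, ∑ j,
            (d i - μ t₀ i) * ((S t₀)⁻¹ * deriv S t₀ * (S t₀)⁻¹) i j * (d j - μ t₀ j)
        - (1/2 : ℝ) * ((S t₀)⁻¹ * deriv S t₀).trace) t₀ :=
  gaussian_score_formula_general μ S t₀ hμ hS hsym hpd d
end

section
/- Let n be a positive integer, Σ : Matrix (Fin n) (Fin n) ℝ a symmetric positive-definite matrix, and A : Matrix (Fin n) (Fin n) ℝ a symmetric matrix. Then E[(rᵀ A r)²] = ∫ (∑_{i,j} r i * A i j * r j)² * φ_Σ(r) dr = (trace(A * Σ))² + 2 * trace((A * Σ)^2). -/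
open Real Matrix MeasureTheory

/-- The centered multivariate Gaussian density `N(0, Σ)` on `ℝⁿ`. -/
noncomputable def gaussDensity {n : ℕ} (Sig : Matrix (Fin n) (Fin n) ℝ)
    (r : Fin n → ℝ) : ℝ :=
  (2 * Real.pi) ^ (-(n : ℝ) / 2) * Sig.det ^ (-(1 : ℝ) / 2) *
    Real.exp (-(1/2 : ℝ) * ∑ i, ∑ j, r i * Sig⁻¹ i j * r j)

/-!
Whitening: write `Σ = M Mᵀ` with `Mᵀ A M = diag d` (factor `Σ = Bᵀ B` and diagonalise `B A Bᵀ`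
orthogonally). The substitution `r = M y` turns `φ_Σ(r) dr` into the standard Gaussian
`∏ φ(yᵢ) dy` and `rᵀ A r` into `∑ dᵢ yᵢ²`, and the traces become `∑ dᵢ` and `∑ dᵢ²`. The second
moment of `∑ dᵢ yᵢ²` follows from `E[yᵢ² yⱼ²] = 1 + 2 δᵢⱼ`, i.e. from `E[y²] = 1` and `E[y⁴] = 3`.
-/

lemma integrable_pow_mul_exp_neg_half_sq (k : ℕ) :
    Integrable fun x : ℝ => x ^ k * exp (-(1 / 2) * x ^ 2) := by
  have h := integrable_rpow_mul_exp_neg_mul_sq (b := 1 / 2) (by norm_num)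
    (s := k) (by linarith [k.cast_nonneg (α := ℝ)])
  refine (h.norm.add h.comp_neg.norm).mono' (by fun_prop) (ae_of_all _ fun x => ?_)
  have hnorm : ‖x ^ k * exp (-(1 / 2) * x ^ 2)‖
      = ‖|x| ^ (k : ℝ) * exp (-(1 / 2) * |x| ^ 2)‖ := by simp
  rcases abs_choice x with hx | hx <;> rw [hnorm, hx]
  · exact le_add_of_nonneg_right (norm_nonneg _)
  · exact le_add_of_nonneg_left (norm_nonneg _)

lemma integral_pow_add_two_mul_exp_neg_half_sq (k : ℕ) :
    ∫ x : ℝ, x ^ (k + 2) * exp (-(1 / 2) * x ^ 2)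
      = (k + 1) * ∫ x : ℝ, x ^ k * exp (-(1 / 2) * x ^ 2) := by
  have hu : ∀ x : ℝ, HasDerivAt (fun x : ℝ => x ^ (k + 1)) ((k + 1) * x ^ k) x := fun x => by
    simpa using hasDerivAt_pow (k + 1) x
  have hv : ∀ x : ℝ, HasDerivAt (fun x : ℝ => -exp (-(1 / 2) * x ^ 2))
      (x * exp (-(1 / 2) * x ^ 2)) x := fun x => by
    refine (((hasDerivAt_pow 2 x).const_mul (-(1 / 2) : ℝ)).exp).neg.congr_deriv ?_
    push_cast; ring
  have hint := integrable_pow_mul_exp_neg_half_sq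
  calc ∫ x : ℝ, x ^ (k + 2) * exp (-(1 / 2) * x ^ 2)
      = ∫ x : ℝ, x ^ (k + 1) * (x * exp (-(1 / 2) * x ^ 2)) := by congr 1 with x; ring
    _ = -∫ x : ℝ, (k + 1) * x ^ k * -exp (-(1 / 2) * x ^ 2) :=
      integral_mul_deriv_eq_deriv_mul_of_integrable (fun x _ => hu x) (fun x _ => hv x)
        ((hint (k + 2)).congr (ae_of_all _ fun x => by simp only [Pi.mul_apply]; ring))
        (((hint k).const_mul (k + 1)).neg.congr
          (ae_of_all _ fun x => by simp only [Pi.mul_apply, Pi.neg_apply]; ring))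
        ((hint (k + 1)).neg.congr
          (ae_of_all _ fun x => by simp only [Pi.mul_apply, Pi.neg_apply]; ring))
    _ = (k + 1) * ∫ x : ℝ, x ^ k * exp (-(1 / 2) * x ^ 2) := by
      rw [← integral_neg, ← integral_const_mul]; congr 1 with x; ring

lemma integral_exp_neg_half_sq : ∫ x : ℝ, exp (-(1 / 2) * x ^ 2) = √(2 * π) := by
  rw [integral_gaussian]; congr 1; field_simp

lemma integral_sq_mul_exp_neg_half_sq : ∫ x : ℝ, x ^ 2 * exp (-(1 / 2) * x ^ 2) = √(2 * π) := by
  rw [integral_pow_add_two_mul_exp_neg_half_sq 0]; simpa using integral_exp_neg_half_sq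

lemma integral_pow_four_mul_exp_neg_half_sq :
    ∫ x : ℝ, x ^ 4 * exp (-(1 / 2) * x ^ 2) = 3 * √(2 * π) := by
  rw [integral_pow_add_two_mul_exp_neg_half_sq 2, integral_sq_mul_exp_neg_half_sq]; norm_num

section StandardGaussian

variable {ι : Type*} [Fintype ι]

lemma integral_sq_mul_sq_mul_prod_exp_neg_half_sq [DecidableEq ι] (i j : ι) :
    ∫ y : ι → ℝ, y i ^ 2 * y j ^ 2 * ∏ m, exp (-(1 / 2) * y m ^ 2)
      = (if i = j then 3 else 1) * √(2 * π) ^ Fintype.card ι := by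
  set a : ι → ℕ := fun m => (if m = i then 2 else 0) + (if m = j then 2 else 0)
  have hmoment : ∀ m, ∫ x : ℝ, x ^ a m * exp (-(1 / 2) * x ^ 2)
      = (if m = i ∧ m = j then 3 else 1) * √(2 * π) := fun m => by
    by_cases hi : m = i <;> by_cases hj : m = j
    · rw [show a m = 4 by simp [a, if_pos hi, if_pos hj], if_pos ⟨hi, hj⟩,
        integral_pow_four_mul_exp_neg_half_sq]
    · rw [show a m = 2 by simp [a, if_pos hi, if_neg hj], if_neg (by tauto), one_mul,
        integral_sq_mul_exp_neg_half_sq]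
    · rw [show a m = 2 by simp [a, if_neg hi, if_pos hj], if_neg (by tauto), one_mul,
        integral_sq_mul_exp_neg_half_sq]
    · rw [show a m = 0 by simp [a, if_neg hi, if_neg hj], if_neg (by tauto), one_mul]
      simpa using integral_exp_neg_half_sq
  have hpow : ∀ y : ι → ℝ, ∏ m, y m ^ a m = y i ^ 2 * y j ^ 2 := fun y => by
    simp only [a, pow_add, Finset.prod_mul_distrib, pow_ite, pow_zero, Finset.prod_ite_eq',
      Finset.mem_univ, if_true]
  calc ∫ y : ι → ℝ, y i ^ 2 * y j ^ 2 * ∏ m, exp (-(1 / 2) * y m ^ 2)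
      = ∫ y : ι → ℝ, ∏ m, y m ^ a m * exp (-(1 / 2) * y m ^ 2) := by
        simp only [Finset.prod_mul_distrib, hpow]
    _ = ∏ m, (if m = i ∧ m = j then 3 else 1) * √(2 * π) := by
        rw [integral_fintype_prod_volume_eq_prod
          (f := fun m x => x ^ a m * exp (-(1 / 2) * x ^ 2))]
        exact Finset.prod_congr rfl fun m _ => hmoment m
    _ = (if i = j then 3 else 1) * √(2 * π) ^ Fintype.card ι := by
        rw [Finset.prod_mul_distrib, Finset.prod_const, Finset.card_univ]
        by_cases hij : i = j
        · subst hij; simp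
        · rw [if_neg hij,
            Finset.prod_eq_one fun m _ => if_neg fun h => hij (h.1.symm.trans h.2)]

lemma integral_sq_sum_mul_sq_mul_prod_exp_neg_half_sq (d : ι → ℝ) :
    ∫ y : ι → ℝ, (∑ i, d i * y i ^ 2) ^ 2 * ∏ m, exp (-(1 / 2) * y m ^ 2)
      = ((∑ i, d i) ^ 2 + 2 * ∑ i, d i ^ 2) * √(2 * π) ^ Fintype.card ι := by
  classical
  have hint : ∀ i j, Integrable fun y : ι → ℝ =>
      y i ^ 2 * y j ^ 2 * ∏ m, exp (-(1 / 2) * y m ^ 2) := fun i j =>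
    .of_integral_ne_zero <| by
      rw [integral_sq_mul_sq_mul_prod_exp_neg_half_sq]; split_ifs <;> positivity
  calc ∫ y : ι → ℝ, (∑ i, d i * y i ^ 2) ^ 2 * ∏ m, exp (-(1 / 2) * y m ^ 2)
      = ∫ y : ι → ℝ, ∑ i, ∑ j,
          d i * d j * (y i ^ 2 * y j ^ 2 * ∏ m, exp (-(1 / 2) * y m ^ 2)) := by
        congr 1 with y
        rw [sq, Finset.sum_mul_sum, Finset.sum_mul]
        exact Finset.sum_congr rfl fun i _ => by
          rw [Finset.sum_mul]; exact Finset.sum_congr rfl fun j _ => by ring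
    _ = ∑ i, ∑ j, d i * d j * ((if i = j then 3 else 1) * √(2 * π) ^ Fintype.card ι) := by
        rw [integral_finsetSum _ fun i _ =>
          integrable_finsetSum _ fun j _ => (hint i j).const_mul _]
        refine Finset.sum_congr rfl fun i _ => ?_
        rw [integral_finsetSum _ fun j _ => (hint i j).const_mul _]
        refine Finset.sum_congr rfl fun j _ => ?_
        rw [integral_const_mul, integral_sq_mul_sq_mul_prod_exp_neg_half_sq]
    _ = ((∑ i, d i) ^ 2 + 2 * ∑ i, d i ^ 2) * √(2 * π) ^ Fintype.card ι := by
        simp_rw [← mul_assoc, ← Finset.sum_mul]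
        congr 1
        have h : ∀ i j : ι, (if i = j then (3 : ℝ) else 1) = 1 + if i = j then 2 else 0 := by
          intro i j; split_ifs <;> norm_num
        simp only [h, mul_add, mul_one, Finset.sum_add_distrib, mul_ite, mul_zero,
          Finset.sum_ite_eq, Finset.mem_univ, if_true, sq, Finset.sum_mul_sum]
        rw [Finset.mul_sum]
        ring_nf

end StandardGaussian

namespace Matrix

variable {ι R : Type*} [Fintype ι] [CommRing R]

theorem sum_sum_mul_mul_eq_dotProduct_mulVec (C : Matrix ι ι R) (x : ι → R) :
    ∑ i, ∑ j, x i * C i j * x j = x ⬝ᵥ (C *ᵥ x) := by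
  simp only [dotProduct, mulVec, Finset.mul_sum, mul_assoc]

theorem sum_sum_mulVec_mul_mul_mulVec (C M : Matrix ι ι R) (y : ι → R) :
    ∑ i, ∑ j, (M *ᵥ y) i * C i j * (M *ᵥ y) j = ∑ i, ∑ j, y i * (Mᵀ * C * M) i j * y j := by
  simp only [sum_sum_mul_mul_eq_dotProduct_mulVec]
  rw [mulVec_mulVec, ← vecMul_transpose, dotProduct_mulVec, vecMul_vecMul, dotProduct_mulVec,
    Matrix.mul_assoc]

theorem sum_sum_mul_diagonal_mul [DecidableEq ι] (d y : ι → R) :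
    ∑ i, ∑ j, y i * diagonal d i j * y j = ∑ i, d i * y i ^ 2 := by
  simp only [diagonal_apply, mul_ite, ite_mul, mul_zero, zero_mul, Finset.sum_ite_eq,
    Finset.mem_univ, if_true]
  exact Finset.sum_congr rfl fun i _ => by ring

theorem trace_mul_mul_transpose (A M : Matrix ι ι R) :
    (A * (M * Mᵀ)).trace = (Mᵀ * A * M).trace := by
  rw [← Matrix.mul_assoc, trace_mul_comm, Matrix.mul_assoc]

theorem trace_sq_mul_mul_transpose [DecidableEq ι] (A M : Matrix ι ι R) :
    ((A * (M * Mᵀ)) ^ 2).trace = ((Mᵀ * A * M) ^ 2).trace :=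
  calc ((A * (M * Mᵀ)) ^ 2).trace = (A * M * (Mᵀ * A * M * Mᵀ)).trace := by
        simp only [sq, Matrix.mul_assoc]
    _ = (Mᵀ * A * M * Mᵀ * (A * M)).trace := trace_mul_comm _ _
    _ = ((Mᵀ * A * M) ^ 2).trace := by simp only [sq, Matrix.mul_assoc]

theorem transpose_mul_inv_mul_of_mul_transpose_eq [DecidableEq ι] {S M : Matrix ι ι R}
    (hMM : M * Mᵀ = S) (hM : IsUnit M.det) :
    Mᵀ * S⁻¹ * M = 1 := by
  rw [← hMM, mul_inv_rev, ← Matrix.mul_assoc, mul_nonsing_inv _ (by rwa [det_transpose]),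
    Matrix.one_mul, nonsing_inv_mul _ hM]

theorem PosSemidef.exists_mul_transpose_eq_and_transpose_mul_mul_eq_diagonal [DecidableEq ι]
    {S A : Matrix ι ι ℝ} (hS : S.PosSemidef) (hA : A.IsSymm) :
    ∃ (M : Matrix ι ι ℝ) (d : ι → ℝ), M * Mᵀ = S ∧ Mᵀ * A * M = diagonal d := by
  open scoped MatrixOrder in
  obtain ⟨B, rfl⟩ := CStarAlgebra.nonneg_iff_eq_star_mul_self.mp hS.nonneg
  have hBAB : (B * A * Bᵀ).IsHermitian := by
    simp [IsHermitian, conjTranspose_eq_transpose_of_trivial, transpose_mul, hA.eq,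
      Matrix.mul_assoc]
  set V : Matrix ι ι ℝ := (hBAB.eigenvectorUnitary : Matrix ι ι ℝ)
  have hV : V * Vᵀ = 1 := by
    simpa [V, star_eq_conjTranspose] using
      Unitary.mul_star_self_of_mem hBAB.eigenvectorUnitary.2
  refine ⟨Bᵀ * V, hBAB.eigenvalues, ?_, ?_⟩
  · rw [transpose_mul, transpose_transpose, Matrix.mul_assoc, ← Matrix.mul_assoc V, hV,
      Matrix.one_mul, star_eq_conjTranspose, conjTranspose_eq_transpose_of_trivial]
  · simpa [Unitary.conjStarAlgAut_apply, Matrix.mul_assoc, transpose_mul, V,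
      star_eq_conjTranspose] using hBAB.conjStarAlgAut_star_eigenvectorUnitary

end Matrix

theorem integral_eq_abs_det_smul_integral_comp_mulVec {ι : Type*} [Fintype ι] [DecidableEq ι]
    {E : Type*} [NormedAddCommGroup E] [NormedSpace ℝ E]
    {M : Matrix ι ι ℝ} (hM : M.det ≠ 0) (g : (ι → ℝ) → E) :
    ∫ x, g x = |M.det| • ∫ y, g (M *ᵥ y) := by
  let e : (ι → ℝ) ≃ᵐ (ι → ℝ) :=
    (M.toLinearEquiv' (M.invertibleOfIsUnitDet hM.isUnit)).toContinuousLinearEquiv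
      |>.toHomeomorph.toMeasurableEquiv
  have hmap : (volume : Measure (ι → ℝ)).map e = ENNReal.ofReal |M.det|⁻¹ • volume := by
    rw [show ⇑e = ⇑(toLin' M) from rfl, Real.map_linearMap_volume_pi_eq_smul_volume_pi
      (by rwa [LinearMap.det_toLin']), LinearMap.det_toLin', abs_inv]
  calc ∫ x, g x = |M.det| • ∫ x, g x ∂(volume.map e) := by
        rw [hmap, integral_smul_measure, ENNReal.toReal_ofReal (by positivity), smul_smul,
          mul_inv_cancel₀ (abs_ne_zero.2 hM), one_smul]
    _ = |M.det| • ∫ y, g (M *ᵥ y) := by rw [integral_map_equiv e g]; rfl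

theorem gaussDensity_mulVec {n : ℕ} {S M : Matrix (Fin n) (Fin n) ℝ} (hMM : M * Mᵀ = S)
    (hM : M.det ≠ 0) (y : Fin n → ℝ) :
    gaussDensity S (M *ᵥ y) = (|M.det| * √(2 * π) ^ n)⁻¹ * ∏ i, exp (-(1 / 2) * y i ^ 2) := by
  have hdet : S.det = |M.det| ^ 2 := by rw [← hMM, det_mul, det_transpose, sq_abs, sq]
  have hquad : ∑ i, ∑ j, (M *ᵥ y) i * S⁻¹ i j * (M *ᵥ y) j = ∑ i, y i ^ 2 := by
    rw [sum_sum_mulVec_mul_mul_mulVec, transpose_mul_inv_mul_of_mul_transpose_eq hMM hM.isUnit,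
      ← diagonal_one, sum_sum_mul_diagonal_mul]
    simp
  have h2π : (2 * π) ^ (-(n : ℝ) / 2) = (√(2 * π) ^ n)⁻¹ := by
    rw [sqrt_eq_rpow, ← rpow_natCast, ← rpow_mul (by positivity), ← rpow_neg (by positivity)]
    ring_nf
  have hdet' : (|M.det| ^ 2) ^ (-(1 : ℝ) / 2) = |M.det|⁻¹ := by
    rw [← rpow_natCast, ← rpow_mul (abs_nonneg _)]
    norm_num [rpow_neg_one]
  rw [gaussDensity, hquad, Finset.mul_sum, exp_sum, hdet, h2π, hdet', mul_inv]
  ring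

theorem gaussian_quadratic_form_second_moment_general {n : ℕ}
    (Sig : Matrix (Fin n) (Fin n) ℝ) (hpd : Sig.PosDef)
    (A : Matrix (Fin n) (Fin n) ℝ) (hA : A.IsSymm) :
    ∫ r : Fin n → ℝ, (∑ i, ∑ j, r i * A i j * r j) ^ 2 * gaussDensity Sig r
      = (A * Sig).trace ^ 2 + 2 * ((A * Sig) ^ 2).trace := by
  obtain ⟨M, d, hMM, hMAM⟩ :=
    hpd.posSemidef.exists_mul_transpose_eq_and_transpose_mul_mul_eq_diagonal hA
  have hM : M.det ≠ 0 := fun h0 => by simpa [← hMM, h0] using hpd.det_pos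
  calc ∫ r : Fin n → ℝ, (∑ i, ∑ j, r i * A i j * r j) ^ 2 * gaussDensity Sig r
      = |M.det| * ∫ y : Fin n → ℝ,
          (∑ i, ∑ j, (M *ᵥ y) i * A i j * (M *ᵥ y) j) ^ 2 * gaussDensity Sig (M *ᵥ y) := by
        rw [integral_eq_abs_det_smul_integral_comp_mulVec hM, smul_eq_mul]
    _ = |M.det| * ∫ y : Fin n → ℝ, (|M.det| * √(2 * π) ^ n)⁻¹ *
          ((∑ i, d i * y i ^ 2) ^ 2 * ∏ m, exp (-(1 / 2) * y m ^ 2)) := by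
        simp_rw [sum_sum_mulVec_mul_mul_mulVec, hMAM, sum_sum_mul_diagonal_mul,
          gaussDensity_mulVec hMM hM]
        congr 2 with y
        ring
    _ = (∑ i, d i) ^ 2 + 2 * ∑ i, d i ^ 2 := by
        rw [integral_const_mul, integral_sq_sum_mul_sq_mul_prod_exp_neg_half_sq, Fintype.card_fin]
        field_simp
    _ = (A * Sig).trace ^ 2 + 2 * ((A * Sig) ^ 2).trace := by
        rw [← hMM, trace_mul_mul_transpose, trace_sq_mul_mul_transpose, hMAM, diagonal_pow,
          trace_diagonal, trace_diagonal]
        rfl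

/-- Second moment of a Gaussian quadratic form:
`E[(rᵀ A r)²] = (tr(AΣ))² + 2 tr((AΣ)²)`. -/
theorem gaussian_quadratic_form_second_moment {n : ℕ} (hn : 0 < n)
    (Sig : Matrix (Fin n) (Fin n) ℝ) (hsym : Sig.IsSymm) (hpd : Sig.PosDef)
    (A : Matrix (Fin n) (Fin n) ℝ) (hA : A.IsSymm) :
    ∫ r : Fin n → ℝ, (∑ i, ∑ j, r i * A i j * r j) ^ 2 * gaussDensity Sig r
      = (A * Sig).trace ^ 2 + 2 * ((A * Sig) ^ 2).trace :=
  gaussian_quadratic_form_second_moment_general Sig hpd A hA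
end
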